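/- For 0 < α < 1 and n = 2m+1 an odd positive integer, the Hadamard finite-part integral f.p.∫_0^∞ x^{α-1-n}/(1+x²) dx equals (−1)^{m+1} (π/2)/cos(πα/2). -/

import Mathlib

/-!
Up to degree `2m` the Taylor expansion of `1 / (1 + x²)` at `0` is the geometric sum
`∑_{j ≤ m} (-x²)^j`, with remainder `(-1)^(m+1) x^(2m+2) / (1 + x²)`. Against `x^(α-1-n)`, each
Taylor monomial integrates over `(ε, ∞)` to exactly the counterterm that the finite part subtracts,
so the regularised expression equals `(-1)^(m+1) ∫_ε^∞ x^α / (1 + x²) dx` for every `ε > 0`.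
As `ε → 0` this tends to `(-1)^(m+1) ∫_0^∞ x^α / (1 + x²) dx`, and the substitutions `y = x²`,
`y = t / (1 - t)` turn that integral into `B(s, 1 - s) / 2 = π / (2 sin πs)` with
`s = (α + 1) / 2`, i.e. `(π / 2) / cos (πα / 2)`.
-/

open MeasureTheory Real Set Filter Topology

theorem hasSum_one_div_one_add_sq {x : ℝ} (hx : ‖x‖ < 1) :
    HasSum (fun n => (if Even n then (-1 : ℝ) ^ (n / 2) else 0) * x ^ n) (1 / (1 + x ^ 2)) := by
  have hgeom : HasSum (fun j => (-x ^ 2) ^ j) (1 / (1 + x ^ 2)) := by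
    have hx2 : ‖-x ^ 2‖ < 1 := by
      rw [norm_neg, norm_pow]
      exact pow_lt_one₀ (norm_nonneg x) hx two_ne_zero
    simpa [sub_neg_eq_add] using hasSum_geometric_of_norm_lt_one hx2
  rw [← (mul_right_injective₀ two_ne_zero).hasSum_iff]
  · convert hgeom using 2 with j
    simp only [Function.comp_apply, even_two_mul, if_true, Nat.mul_div_cancel_left j two_pos]
    ring
  · rintro n hn
    have hodd : ¬Even n := fun ⟨j, hj⟩ => hn ⟨j, by simp only [hj]; ring⟩
    simp [hodd]

theorem hasFPowerSeriesOnBall_one_div_one_add_sq :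
    HasFPowerSeriesOnBall (fun x : ℝ => 1 / (1 + x ^ 2))
      (FormalMultilinearSeries.ofScalars ℝ fun n => if Even n then (-1 : ℝ) ^ (n / 2) else 0)
      0 1 where
  r_le := by
    refine FormalMultilinearSeries.le_radius_of_bound _ 1 fun n => ?_
    by_cases hn : Even n <;> simp [hn]
  r_pos := one_pos
  hasSum {y} hy := by
    rw [← ENNReal.coe_one, Metric.eball_coe, mem_ball_zero_iff, NNReal.coe_one] at hy
    simpa [FormalMultilinearSeries.ofScalars_apply_eq, mul_comm] using hasSum_one_div_one_add_sq hy

theorem iteratedDeriv_one_div_one_add_sq_zero (k : ℕ) :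
    iteratedDeriv k (fun x : ℝ => 1 / (1 + x ^ 2)) 0
      = (if Even k then (-1 : ℝ) ^ (k / 2) else 0) * k.factorial := by
  rw [iteratedDeriv_eq_iteratedFDeriv,
    ← hasFPowerSeriesOnBall_one_div_one_add_sq.factorial_smul 1 k]
  simp [mul_comm]

theorem one_div_one_add_sq_eq_taylor_add (m : ℕ) (x : ℝ) :
    1 / (1 + x ^ 2) = ∑ k ∈ Finset.range (2 * m + 1),
        iteratedDeriv k (fun x : ℝ => 1 / (1 + x ^ 2)) 0 / k.factorial * x ^ k
      + x ^ (2 * m + 1) * ((-1) ^ (m + 1) * x / (1 + x ^ 2)) := by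
  simp only [iteratedDeriv_one_div_one_add_sq_zero, ne_eq, Nat.cast_eq_zero,
    Nat.factorial_ne_zero, not_false_eq_true, mul_div_cancel_right₀]
  have hx : 1 + x ^ 2 ≠ 0 := by positivity
  induction m with
  | zero =>
    simp only [mul_zero, zero_add, Finset.sum_range_one, Even.zero, if_true, Nat.zero_div,
      pow_zero, pow_one, one_mul]
    field_simp
    ring
  | succ m ih =>
    have hodd : ¬Even (2 * m + 1) := Nat.not_even_two_mul_add_one m
    have heven : Even (2 * m + 2) := ⟨m + 1, by ring⟩
    rw [show 2 * (m + 1) + 1 = 2 * m + 1 + 1 + 1 by ring, Finset.sum_range_succ,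
      Finset.sum_range_succ, if_neg hodd, if_pos heven,
      show (2 * m + 2) / 2 = m + 1 by omega, ih]
    field_simp
    ring

theorem integral_Ioi_rpow_mul_sub_sum {g r : ℝ → ℝ} {c : ℕ → ℝ} {α e : ℝ} {n : ℕ}
    (hα : α < 1) (he : 0 < e)
    (hg : ∀ x > 0, g x = ∑ k ∈ Finset.range n, c k * x ^ k + x ^ n * r x)
    (hr : IntegrableOn (fun x => x ^ (α - 1) * r x) (Ioi e)) :
    (∫ x in Ioi e, x ^ (α - 1 - n) * g x) -
        ∑ k ∈ Finset.range n, e ^ (α - n + k) * c k / (n - α - k)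
      = ∫ x in Ioi e, x ^ (α - 1) * r x := by
  have hexp : ∀ k ∈ Finset.range n, α - 1 - n + k < -1 := fun k hk => by
    have : (k : ℝ) + 1 ≤ n := by exact_mod_cast Finset.mem_range.mp hk
    linarith
  have hpow : ∀ k ∈ Finset.range n,
      IntegrableOn (fun x : ℝ => c k * x ^ (α - 1 - n + k)) (Ioi e) := fun k hk =>
    (integrableOn_Ioi_rpow_of_lt (hexp k hk) he).const_mul _
  have hexpand : ∀ x ∈ Ioi e, x ^ (α - 1 - n) * g x
      = ∑ k ∈ Finset.range n, c k * x ^ (α - 1 - n + k) + x ^ (α - 1) * r x := by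
    intro x (hx : e < x)
    have hx0 : 0 < x := he.trans hx
    rw [hg x hx0, mul_add, Finset.mul_sum, ← mul_assoc, ← rpow_natCast, ← rpow_add hx0,
      sub_add_cancel]
    congr 1
    refine Finset.sum_congr rfl fun k _ => ?_
    rw [rpow_add hx0, rpow_natCast]
    ring
  have hmonomial : ∀ k ∈ Finset.range n, ∫ x in Ioi e, c k * x ^ (α - 1 - n + k)
      = e ^ (α - n + k) * c k / (n - α - k) := fun k hk => by
    have hne : (n : ℝ) - α - k ≠ 0 := by linarith [hexp k hk]
    have hne' : α - n + k ≠ 0 := by linarith [hexp k hk]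
    rw [integral_const_mul, integral_Ioi_rpow_of_lt (hexp k hk) he,
      show α - 1 - n + k + 1 = α - n + k by ring]
    field_simp
    ring
  rw [setIntegral_congr_fun measurableSet_Ioi hexpand,
    integral_add (integrable_finsetSum _ hpow) hr,
    integral_finsetSum _ hpow, Finset.sum_congr rfl hmonomial, add_sub_cancel_left]

theorem continuousOn_rpow_div_one_add_sq (c : ℝ) :
    ContinuousOn (fun x : ℝ => x ^ c / (1 + x ^ 2)) (Ioi 0) :=
  ((continuousOn_id.rpow_const fun _ hx => Or.inl (ne_of_gt hx)).div (by fun_prop))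
    fun _ _ => by positivity

theorem integrableOn_Ioi_rpow_div_one_add_sq {c e : ℝ} (he : 0 < e) (hc : c < 1) :
    IntegrableOn (fun x : ℝ => x ^ c / (1 + x ^ 2)) (Ioi e) := by
  refine (integrableOn_Ioi_rpow_of_lt (by linarith : c - 2 < -1) he).mono'
    (((continuousOn_rpow_div_one_add_sq c).mono (Ioi_subset_Ioi he.le)).aestronglyMeasurable
      measurableSet_Ioi) ?_
  filter_upwards [ae_restrict_mem measurableSet_Ioi] with x (hx : e < x)
  have hx0 : 0 < x := he.trans hx
  rw [norm_of_nonneg (by positivity), rpow_sub hx0, rpow_two]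
  gcongr
  linarith

theorem integrableOn_Ioi_zero_rpow_div_one_add_sq {c : ℝ} (hc₀ : -1 < c) (hc₁ : c < 1) :
    IntegrableOn (fun x : ℝ => x ^ c / (1 + x ^ 2)) (Ioi 0) := by
  rw [← Ioc_union_Ioi_eq_Ioi zero_le_one, integrableOn_union]
  refine ⟨?_, integrableOn_Ioi_rpow_div_one_add_sq one_pos hc₁⟩
  refine (intervalIntegral.intervalIntegrable_rpow' hc₀ (a := 0) (b := 1)).1.mono'
    (((continuousOn_rpow_div_one_add_sq c).mono Ioc_subset_Ioi_self).aestronglyMeasurable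
      measurableSet_Ioc) ?_
  filter_upwards [ae_restrict_mem measurableSet_Ioc] with x hx
  rw [norm_of_nonneg (by have := hx.1; positivity)]
  exact div_le_self (rpow_nonneg hx.1.le c) (by nlinarith)

theorem tendsto_setIntegral_Ioi_nhdsGT {E : Type*} [NormedAddCommGroup E] [NormedSpace ℝ E]
    {μ : Measure ℝ} {f : ℝ → E} {a : ℝ} (hf : IntegrableOn f (Ioi a) μ) :
    Tendsto (fun e => ∫ x in Ioi e, f x ∂μ) (𝓝[>] a) (𝓝 (∫ x in Ioi a, f x ∂μ)) := by
  have hcover : AECover (μ.restrict (Ioi a)) (𝓝[>] a) (fun e => Ioi e) :=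
    aecover_Ioi_of_Ioi (tendsto_id.mono_left nhdsWithin_le_nhds)
  refine (hcover.integral_tendsto_of_countably_generated hf).congr' ?_
  filter_upwards [self_mem_nhdsWithin] with e (he : a < e)
  rw [Measure.restrict_restrict measurableSet_Ioi, Ioi_inter_Ioi, sup_of_le_left he.le]

theorem integral_rpow_mul_one_sub_rpow_neg {s : ℝ} (hs₀ : 0 < s) (hs₁ : s < 1) :
    ∫ t in (0:ℝ)..1, t ^ (s - 1) * (1 - t) ^ (-s) = π / sin (π * s) := by
  have hbeta : Complex.betaIntegral s (1 - s) = ((π / sin (π * s) : ℝ) : ℂ) := by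
    have h := Complex.Gamma_mul_Gamma_eq_betaIntegral (s := (s : ℂ)) (t := 1 - s)
      (by simpa using hs₀) (by simpa using hs₁)
    rw [add_sub_cancel, Complex.Gamma_one, one_mul, Complex.Gamma_mul_Gamma_one_sub] at h
    rw [← h]
    push_cast
    rfl
  have hreal : Complex.betaIntegral s (1 - s)
      = ((∫ t in (0:ℝ)..1, t ^ (s - 1) * (1 - t) ^ (-s) : ℝ) : ℂ) := by
    rw [Complex.betaIntegral, ← intervalIntegral.integral_ofReal]
    refine intervalIntegral.integral_congr fun t ht => ?_
    rw [uIcc_of_le zero_le_one] at ht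
    simp only [Complex.ofReal_mul, Complex.ofReal_cpow ht.1,
      Complex.ofReal_cpow (sub_nonneg.mpr ht.2)]
    push_cast
    ring_nf
  exact_mod_cast hreal.symm.trans hbeta

theorem image_div_one_sub_Ioo : (fun t : ℝ => t / (1 - t)) '' Ioo 0 1 = Ioi 0 := by
  ext y
  constructor
  · rintro ⟨t, ⟨ht₀, ht₁⟩, rfl⟩
    exact div_pos ht₀ (sub_pos.mpr ht₁)
  · intro (hy : 0 < y)
    refine ⟨y / (1 + y), ⟨by positivity, (div_lt_one (by positivity)).mpr (by linarith)⟩, ?_⟩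
    field_simp
    ring

theorem integral_Ioi_zero_rpow_div_one_add {s : ℝ} (hs₀ : 0 < s) (hs₁ : s < 1) :
    ∫ y in Ioi (0:ℝ), y ^ (s - 1) / (1 + y) = π / sin (π * s) := by
  have hderiv : ∀ t ∈ Ioo (0:ℝ) 1,
      HasDerivWithinAt (fun t => t / (1 - t)) ((1 - t)⁻¹ ^ 2) (Ioo 0 1) t := by
    intro t ht
    have h1t : 1 - t ≠ 0 := (sub_pos.mpr ht.2).ne'
    refine ((hasDerivAt_id' t).div ((hasDerivAt_id' t).const_sub 1) h1t).hasDerivWithinAt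
      |>.congr_deriv ?_
    field_simp
    ring
  have hinj : InjOn (fun t : ℝ => t / (1 - t)) (Ioo 0 1) := by
    intro a ha b hb hab
    have ha1 : 1 - a ≠ 0 := (sub_pos.mpr ha.2).ne'
    have hb1 : 1 - b ≠ 0 := (sub_pos.mpr hb.2).ne'
    field_simp at hab
    linarith
  rw [← image_div_one_sub_Ioo,
    integral_image_eq_integral_abs_deriv_smul measurableSet_Ioo hderiv hinj,
    ← integral_rpow_mul_one_sub_rpow_neg hs₀ hs₁, intervalIntegral.integral_of_le zero_le_one,
    integral_Ioc_eq_integral_Ioo]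
  refine setIntegral_congr_fun measurableSet_Ioo fun t ⟨ht₀, ht₁⟩ => ?_
  have h1t : 0 < 1 - t := sub_pos.mpr ht₁
  have hsplit : (1 - t) ^ s = (1 - t) ^ (s - 1) * (1 - t) := by
    rw [← rpow_add_one h1t.ne', sub_add_cancel]
  have : 0 < (1 - t) ^ (s - 1) := rpow_pos_of_pos h1t _
  rw [smul_eq_mul, abs_of_nonneg (by positivity), div_rpow ht₀.le h1t.le, rpow_neg h1t.le, hsplit]
  field_simp
  ring

theorem integral_Ioi_zero_rpow_div_one_add_sq {c : ℝ} (hc₀ : -1 < c) (hc₁ : c < 1) :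
    ∫ x in Ioi (0:ℝ), x ^ c / (1 + x ^ 2) = π / 2 / cos (π * c / 2) := by
  have hsub : ∫ x in Ioi (0:ℝ), x ^ c / (1 + x ^ 2)
      = ∫ y in Ioi (0:ℝ), (1 / 2 : ℝ) * (y ^ ((c + 1) / 2 - 1) / (1 + y)) := by
    rw [← integral_comp_rpow_Ioi (fun y => (1 / 2 : ℝ) * (y ^ ((c + 1) / 2 - 1) / (1 + y)))
      two_ne_zero]
    refine setIntegral_congr_fun measurableSet_Ioi fun x (hx : 0 < x) => ?_
    have hpow : (x ^ (2:ℝ)) ^ ((c + 1) / 2 - 1) = x ^ (c - 1) := by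
      rw [← rpow_mul hx.le]; ring_nf
    rw [smul_eq_mul, hpow, rpow_two, abs_two, show (2:ℝ) - 1 = 1 by norm_num, rpow_one,
      rpow_sub_one hx.ne']
    field_simp
  have hsin : sin (π * ((c + 1) / 2)) = cos (π * c / 2) := by
    rw [show π * ((c + 1) / 2) = π * c / 2 + π / 2 by ring, sin_add_pi_div_two]
  rw [hsub, integral_const_mul, integral_Ioi_zero_rpow_div_one_add (by linarith) (by linarith),
    hsin]
  ring

theorem integral_Ioi_rpow_div_one_add_sq_sub_sum {α e : ℝ} (hα : α < 1) (m : ℕ) (he : 0 < e) :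
    (∫ x in Ioi e, x ^ (α - 1 - (2 * m + 1 : ℕ)) / (1 + x ^ 2)) -
        ∑ k ∈ Finset.range (2 * m + 1),
          e ^ (α - (2 * m + 1 : ℕ) + k) * iteratedDeriv k (fun x : ℝ => 1 / (1 + x ^ 2)) 0 /
            ((k.factorial : ℝ) * (((2 * m + 1 : ℕ) : ℝ) - α - k)) =
      (-1) ^ (m + 1) * ∫ x in Ioi e, x ^ α / (1 + x ^ 2) := by
  have hrem : EqOn (fun x => (-1) ^ (m + 1) * (x ^ α / (1 + x ^ 2)))
      (fun x => x ^ (α - 1) * ((-1) ^ (m + 1) * x / (1 + x ^ 2))) (Ioi e) := by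
    intro x (hx : e < x)
    have hx0 : x ≠ 0 := (he.trans hx).ne'
    simp only [rpow_sub_one hx0]
    field_simp
  have key := integral_Ioi_rpow_mul_sub_sum hα he
    (fun x _ => one_div_one_add_sq_eq_taylor_add m x)
    (IntegrableOn.congr_fun ((integrableOn_Ioi_rpow_div_one_add_sq he hα).const_mul _) hrem
      measurableSet_Ioi)
  rw [← setIntegral_congr_fun measurableSet_Ioi hrem, integral_const_mul] at key
  simpa only [mul_div_assoc', mul_one, div_div] using key

theorem stmt_10 (α : ℝ) (hα0 : 0 < α) (hα1 : α < 1) (m : ℕ) :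
    Tendsto (fun e : ℝ =>
        (∫ x in Ioi e, x ^ (α - 1 - (2 * m + 1 : ℕ)) / (1 + x ^ 2)) -
          ∑ k ∈ Finset.range (2 * m + 1),
            e ^ (α - (2 * m + 1 : ℕ) + k) *
              iteratedDeriv k (fun x : ℝ => 1 / (1 + x ^ 2)) 0 /
                ((k.factorial : ℝ) * (((2 * m + 1 : ℕ) : ℝ) - α - k)))
      (𝓝[>] 0)
      (𝓝 ((-1) ^ (m + 1) * (Real.pi / 2) / Real.cos (Real.pi * α / 2))) := by
  have hlim := (tendsto_setIntegral_Ioi_nhdsGT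
    (integrableOn_Ioi_zero_rpow_div_one_add_sq (by linarith) hα1)).const_mul ((-1 : ℝ) ^ (m + 1))
  rw [integral_Ioi_zero_rpow_div_one_add_sq (by linarith) hα1, ← mul_div_assoc] at hlim
  refine hlim.congr' ?_
  filter_upwards [self_mem_nhdsWithin] with e (he : 0 < e)
  exact (integral_Ioi_rpow_div_one_add_sq_sub_sum hα1 m he).symm
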